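/- The minimum average-case cost of a precedence-closed decision tree for the constructed instance (H, T, ≼_T) equals exactly twice the minimum of covT(C) over precedence-closed sequences C of distinct sets from S covering all of U. (This is the correctness of the reduction showing that approximating Precedence Constrained Average Case Decision Tree is as hard as approximating Precedence Constrained Min-Sum Set Cover with f = 1.) -/

import Mathlib

open Finset

universe u

inductive DTree (α : Type u) : Type u where
  | leaf : α → DTree α
  | node : Finset (Finset α) → (Finset α → DTree α) → DTree α

variable {α : Type*} [DecidableEq α]

noncomputable def DTree.cost : DTree α → α → ℕ
  | .leaf _, _ => 0
  | .node t c, h =>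
      if hR : ∃ R ∈ t, h ∈ R then 1 + (c hR.choose).cost h else 0

noncomputable def costW (H : Finset α) (D : DTree α) : ℕ := H.sup (fun h => D.cost h)

noncomputable def costA (H : Finset α) (D : DTree α) : ℕ := ∑ h ∈ H, D.cost h

def IsTest (H : Finset α) (t : Finset (Finset α)) : Prop :=
  (∀ R ∈ t, R.Nonempty) ∧ (∀ R ∈ t, ∀ R' ∈ t, R ≠ R' → Disjoint R R') ∧ t.sup id = H

def Separates (H : Finset α) (T : Finset (Finset (Finset α))) : Prop :=
  ∀ h₁ ∈ H, ∀ h₂ ∈ H, h₁ ≠ h₂ → ∃ t ∈ T, ∃ R ∈ t, h₁ ∈ R ∧ h₂ ∉ R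

def Valid (T : Finset (Finset (Finset α))) : Finset α → DTree α → Prop
  | Hv, .leaf h => Hv = {h}
  | Hv, .node t c => t ∈ T ∧ ∀ R ∈ t, (R ∩ Hv).Nonempty → Valid T (R ∩ Hv) (c R)

def PrecValid (T : Finset (Finset (Finset α)))
    (le : Finset (Finset α) → Finset (Finset α) → Prop) :
    Finset (Finset (Finset α)) → Finset α → DTree α → Prop
  | _, Hv, .leaf h => Hv = {h}
  | P, Hv, .node t c =>
      t ∈ T ∧ (∀ t' ∈ T, le t' t → t' ≠ t → t' ∈ P) ∧
      ∀ R ∈ t, (R ∩ Hv).Nonempty → PrecValid T le (insert t P) (R ∩ Hv) (c R)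

noncomputable def sumSizes : DTree α → Finset α → ℕ
  | .leaf _, _ => 0
  | .node t c, Hv =>
      Hv.card + ∑ R ∈ t.filter (fun R => (R ∩ Hv).Nonempty), sumSizes (c R) (R ∩ Hv)

noncomputable def nleaves : DTree α → Finset α → ℕ
  | .leaf _, _ => 1
  | .node t c, Hv => ∑ R ∈ t.filter (fun R => (R ∩ Hv).Nonempty), nleaves (c R) (R ∩ Hv)

def xiT (H : Finset α) (t : Finset (Finset α)) : Finset α :=
  H.filter (fun h => ∃ R ∈ t, h ∈ R ∧ 4 * R.card ≤ 3 * H.card)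

/-- The test associated to a set X in the reduction: singleton replies for the
hypotheses of elements of X, plus (if nonempty) one reply collecting all hypotheses
of elements outside X. -/
def tX {α : Type*} [DecidableEq α] (U X : Finset α) : Finset (Finset (α × Bool)) :=
  ((X ×ˢ (Finset.univ : Finset Bool)).image (fun p => ({p} : Finset (α × Bool)))) ∪
    (({(U \ X) ×ˢ (Finset.univ : Finset Bool)} : Finset (Finset (α × Bool))).filter
      (fun R => R.Nonempty))

/-- The partial order on the constructed tests induced by the order on the sets. -/
def liftLe {α : Type*} [DecidableEq α] (U : Finset α) (S : Finset (Finset α))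
    (le : Finset α → Finset α → Prop) :
    Finset (Finset (α × Bool)) → Finset (Finset (α × Bool)) → Prop :=
  fun t₁ t₂ => ∃ X ∈ S, ∃ Y ∈ S, tX U X = t₁ ∧ tX U Y = t₂ ∧ le X Y

/-- Coverage time of an element u in a sequence of sets: the 1-based index of the
first set containing u (or the length of the sequence if none does). -/
def listCovTime {α : Type*} [DecidableEq α] (L : List (Finset α)) (u : α) : ℕ :=
  match L.findIdx? (fun X => decide (u ∈ X)) with
  | some i => i + 1
  | none => L.length

/-- A sequence is precedence-closed: every strict predecessor of an entry occurs
at an earlier position. -/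
def PrecSeq {β : Type*} (S : Finset β) (le : β → β → Prop) (L : List β) : Prop :=
  ∀ (i : ℕ) (hi : i < L.length), ∀ Y ∈ S, le Y (L.get ⟨i, hi⟩) → Y ≠ L.get ⟨i, hi⟩ →
    ∃ j, j < i ∧ ∃ hj : j < L.length, L.get ⟨j, hj⟩ = Y

/-!
A test `t_X` answers with a singleton for each hypothesis of an element of `X` and lumps all
other hypotheses into one reply, so the only branch of a tree that keeps more than one candidate
is the "rest" branch. The tests asked along it form a precedence-closed sequence of sets, and
both hypotheses `h_u^0, h_u^1` are separated from the rest exactly when the first set containing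
`u` is asked; hence each copy costs at least the coverage time of `u`. Tests repeated on that
branch can be dropped: a set already asked is disjoint from the remaining candidates. Conversely,
asking the sets of a precedence-closed cover in order yields a tree in which both copies of `u`
cost exactly its coverage time.
-/

theorem Nat.sInf_eq_mul_sInf_of_forall {A B : Set ℕ} (k : ℕ) (hBA : ∀ b ∈ B, k * b ∈ A)
    (hAB : ∀ a ∈ A, ∃ b ∈ B, k * b ≤ a) : sInf A = k * sInf B := by
  rcases B.eq_empty_or_nonempty with rfl | hB
  · have : A = ∅ := Set.eq_empty_of_forall_notMem fun a ha => by simpa using hAB a ha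
    simp [this]
  have hA : A.Nonempty := ⟨_, hBA _ (Nat.sInf_mem hB)⟩
  obtain ⟨b, hb, hba⟩ := hAB _ (Nat.sInf_mem hA)
  exact le_antisymm (Nat.sInf_le (hBA _ (Nat.sInf_mem hB)))
    ((Nat.mul_le_mul_left k (Nat.sInf_le hb)).trans hba)

theorem product_univ_bool_ne_singleton {β : Type*} (V : Finset β) (p : β × Bool) :
    V ×ˢ (univ : Finset Bool) ≠ {p} := by
  intro h
  have := congrArg card h
  simp only [card_product, card_univ, Fintype.card_bool, card_singleton] at this
  omega

theorem sdiff_product_inter_product {U V : Finset α} (hVU : V ⊆ U) (X : Finset α) :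
    (U \ X) ×ˢ (univ : Finset Bool) ∩ V ×ˢ univ = (V \ X) ×ˢ univ := by
  rw [product_inter_product, sdiff_inter_right_comm, inter_eq_right.2 hVU, inter_self]

theorem costA_product_univ_bool {β : Type*} [DecidableEq β] (U : Finset β)
    (D : DTree (β × Bool)) :
    costA (U ×ˢ univ) D = ∑ u ∈ U, (D.cost (u, true) + D.cost (u, false)) := by
  simp only [costA, sum_product, Fintype.sum_bool]

theorem DTree.cost_node_of_mem {t : Finset (Finset α)} {c : Finset α → DTree α} {h : α}
    {R : Finset α} (hR : R ∈ t) (hh : h ∈ R) (huniq : ∀ R' ∈ t, h ∈ R' → R' = R) :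
    (DTree.node t c).cost h = 1 + (c R).cost h := by
  have hex : ∃ R ∈ t, h ∈ R := ⟨R, hR, hh⟩
  rw [DTree.cost, dif_pos hex, huniq _ hex.choose_spec.1 hex.choose_spec.2]

theorem listCovTime_cons (X : Finset α) (L : List (Finset α)) (u : α) :
    listCovTime (X :: L) u = if u ∈ X then 1 else listCovTime L u + 1 := by
  unfold listCovTime
  rw [List.findIdx?_cons]
  by_cases h : u ∈ X
  · simp [h]
  · cases List.findIdx? (fun X => decide (u ∈ X)) L <;> simp [h]

def PrecSeqAfter {β : Type*} [DecidableEq β] (S : Finset β) (le : β → β → Prop) :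
    Finset β → List β → Prop
  | _, [] => True
  | P, X :: L => X ∈ S ∧ X ∉ P ∧ (∀ Y ∈ S, le Y X → Y ≠ X → Y ∈ P) ∧
      PrecSeqAfter S le (insert X P) L

section PrecSeqAfter

variable {β : Type*} [DecidableEq β] {S : Finset β} {le : β → β → Prop}

theorem precSeqAfter_iff {P : Finset β} {L : List β} :
    PrecSeqAfter S le P L ↔ (∀ X ∈ L, X ∈ S ∧ X ∉ P) ∧ L.Nodup ∧
      ∀ (i : ℕ) (hi : i < L.length), ∀ Y ∈ S, le Y L[i] → Y ≠ L[i] → Y ∈ P ∨ Y ∈ L.take i := by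
  induction L generalizing P with
  | nil => simp [PrecSeqAfter]
  | cons X L ih =>
    simp only [PrecSeqAfter, ih, List.length_cons, Nat.forall_lt_succ_left', List.nodup_cons,
      mem_insert, List.getElem_cons_zero, List.getElem_cons_succ, List.take_zero,
      List.take_succ_cons, List.not_mem_nil, or_false, List.mem_cons, forall_eq_or_imp, not_or,
      imp_and, forall_and, List.forall_mem_ne', or_assoc, or_left_comm]
    tauto

theorem precSeqAfter_empty_iff {L : List β} :
    PrecSeqAfter S le ∅ L ↔ (∀ X ∈ L, X ∈ S) ∧ L.Nodup ∧ PrecSeq S le L := by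
  have mem_take {i : ℕ} {Y : β} : Y ∈ L.take i ↔ ∃ j < i, ∃ hj : j < L.length, L[j] = Y := by
    rw [List.mem_take_iff_getElem]
    exact ⟨fun ⟨j, hj, h⟩ => ⟨j, (lt_min_iff.1 hj).1, _, h⟩,
      fun ⟨j, hi, hj, h⟩ => ⟨j, lt_min hi hj, h⟩⟩
  simp [precSeqAfter_iff, PrecSeq, mem_take]

end PrecSeqAfter

section Reduction

variable {U X : Finset α}

theorem mem_tX {R : Finset (α × Bool)} :
    R ∈ tX U X ↔ (∃ u ∈ X, ∃ b, R = {(u, b)}) ∨ ((U \ X).Nonempty ∧ R = (U \ X) ×ˢ univ) := by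
  simp only [tX, mem_union, mem_image, mem_filter, mem_singleton, mem_product, mem_univ,
    and_true, Prod.exists]
  aesop

theorem singleton_mem_tX {u : α} {b : Bool} : {(u, b)} ∈ tX U X ↔ u ∈ X := by
  rw [mem_tX]
  refine ⟨?_, fun hu => .inl ⟨u, hu, b, rfl⟩⟩
  rintro (⟨u', hu', b', h⟩ | ⟨-, h⟩)
  · rw [singleton_inj, Prod.mk.injEq] at h
    exact h.1 ▸ hu'
  · exact absurd h.symm (product_univ_bool_ne_singleton _ _)

theorem sdiff_product_mem_tX {u : α} (hu : u ∈ U) (hX : u ∉ X) :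
    (U \ X) ×ˢ univ ∈ tX U X :=
  mem_tX.2 (.inr ⟨⟨u, mem_sdiff.2 ⟨hu, hX⟩⟩, rfl⟩)

theorem tX_injective (U : Finset α) : Function.Injective (tX U) := fun X Y h => by
  ext u
  rw [← singleton_mem_tX (U := U) (b := true), h, singleton_mem_tX]

theorem eq_of_mem_tX {R : Finset (α × Bool)} {u : α} {b : Bool} (hR : R ∈ tX U X)
    (hu : (u, b) ∈ R) : R = if u ∈ X then {(u, b)} else (U \ X) ×ˢ univ := by
  rcases mem_tX.1 hR with ⟨u', hu', b', rfl⟩ | ⟨-, rfl⟩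
  · obtain ⟨rfl, rfl⟩ := Prod.mk.injEq .. ▸ mem_singleton.1 hu
    rw [if_pos hu']
  · rw [if_neg (mem_sdiff.1 (mem_product.1 hu).1).2]

theorem cost_node_tX_of_mem {c : Finset (α × Bool) → DTree (α × Bool)} {u : α} (b : Bool)
    (hX : u ∈ X) : (DTree.node (tX U X) c).cost (u, b) = 1 + (c {(u, b)}).cost (u, b) :=
  DTree.cost_node_of_mem (singleton_mem_tX.2 hX) (mem_singleton_self _)
    fun _ hR hu => (eq_of_mem_tX hR hu).trans (if_pos hX)

theorem cost_node_tX_of_notMem {c : Finset (α × Bool) → DTree (α × Bool)} {u : α} (b : Bool)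
    (hu : u ∈ U) (hX : u ∉ X) :
    (DTree.node (tX U X) c).cost (u, b) = 1 + (c ((U \ X) ×ˢ univ)).cost (u, b) :=
  DTree.cost_node_of_mem (sdiff_product_mem_tX hu hX) (by simp [hu, hX])
    fun _ hR hu => (eq_of_mem_tX hR hu).trans (if_neg hX)

theorem forall_liftLe_imp_mem_image_iff {S P : Finset (Finset α)}
    {le : Finset α → Finset α → Prop} (hX : X ∈ S) :
    (∀ t ∈ S.image (tX U), liftLe U S le t (tX U X) → t ≠ tX U X → t ∈ P.image (tX U)) ↔
      ∀ Y ∈ S, le Y X → Y ≠ X → Y ∈ P := by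
  constructor
  · intro h Y hY hle hne
    exact (tX_injective U).mem_finset_image.1 <|
      h _ (mem_image_of_mem _ hY) ⟨Y, hY, X, hX, rfl, rfl, hle⟩ ((tX_injective U).ne hne)
  · rintro h _ - ⟨Y, hY, X', -, rfl, hX', hle⟩ hne
    obtain rfl := tX_injective U hX'
    exact mem_image_of_mem _ (h Y hY hle (ne_of_apply_ne _ hne))

-- `d` labels only the leaf after the last set, which no covered candidate reaches.
open Classical in
noncomputable def treeOfList (U : Finset α) (d : α × Bool) : List (Finset α) → DTree (α × Bool)
  | [] => .leaf d
  | X :: L => .node (tX U X) fun R => if h : ∃ p, R = {p} then .leaf h.choose else treeOfList U d L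

variable (d : α × Bool)

theorem cost_treeOfList (L : List (Finset α)) {u : α} (hu : u ∈ U) (b : Bool) :
    (treeOfList U d L).cost (u, b) = listCovTime L u := by
  induction L with
  | nil => rfl
  | cons X L ih =>
    rw [treeOfList, listCovTime_cons]
    by_cases hX : u ∈ X
    · rw [cost_node_tX_of_mem b hX, dif_pos ⟨_, rfl⟩, if_pos hX]
      rfl
    · rw [cost_node_tX_of_notMem b hu hX, if_neg hX,
        dif_neg fun ⟨p, hp⟩ => product_univ_bool_ne_singleton _ p hp, ih, add_comm]

theorem costA_treeOfList (L : List (Finset α)) :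
    costA (U ×ˢ univ) (treeOfList U d L) = 2 * ∑ u ∈ U, listCovTime L u := by
  rw [costA_product_univ_bool, mul_sum]
  exact sum_congr rfl fun u hu => by simp only [cost_treeOfList d L hu, two_mul]

theorem precValid_treeOfList {S : Finset (Finset α)} {le : Finset α → Finset α → Prop}
    {L : List (Finset α)} {V : Finset α} {P : Finset (Finset α)} (hVU : V ⊆ U) (hV : V.Nonempty)
    (hL : PrecSeqAfter S le P L) (hcov : ∀ u ∈ V, ∃ X ∈ L, u ∈ X) :
    PrecValid (S.image (tX U)) (liftLe U S le) (P.image (tX U)) (V ×ˢ univ)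
      (treeOfList U d L) := by
  induction L generalizing V P with
  | nil =>
    obtain ⟨u, hu⟩ := hV
    simpa using hcov u hu
  | cons X L ih =>
    obtain ⟨hXS, -, hpred, hL⟩ := hL
    refine ⟨mem_image_of_mem _ hXS, (forall_liftLe_imp_mem_image_iff hXS).2 hpred, ?_⟩
    rintro R hR ⟨⟨u, b⟩, hp⟩
    obtain ⟨hRu, hVu⟩ := mem_inter.1 hp
    have hu : u ∈ V := (mem_product.1 hVu).1
    rw [eq_of_mem_tX hR hRu]
    split_ifs with hX <;> beta_reduce
    · rw [dif_pos ⟨_, rfl⟩, PrecValid, inter_eq_left.2 (singleton_subset_iff.2 hVu)]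
      generalize_proofs h
      exact h.choose_spec
    · rw [dif_neg fun ⟨p, hp⟩ => product_univ_bool_ne_singleton _ p hp,
        sdiff_product_inter_product hVU, ← image_insert]
      refine ih (sdiff_subset.trans hVU) ⟨u, mem_sdiff.2 ⟨hu, hX⟩⟩ hL fun v hv => ?_
      obtain ⟨Y, hY, hvY⟩ := hcov v (mem_sdiff.1 hv).1
      refine ⟨Y, (List.mem_cons.1 hY).resolve_left ?_, hvY⟩
      rintro rfl
      exact (mem_sdiff.1 hv).2 hvY

theorem exists_precSeqAfter_of_precValid {U : Finset α} {S : Finset (Finset α)}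
    {le : Finset α → Finset α → Prop} (D : DTree (α × Bool)) {V : Finset α}
    {P : Finset (Finset α)} (hVU : V ⊆ U) (hV : V.Nonempty) (hPV : ∀ Y ∈ P, Disjoint Y V)
    (hD : PrecValid (S.image (tX U)) (liftLe U S le) (P.image (tX U)) (V ×ˢ univ) D) :
    ∃ L, PrecSeqAfter S le P L ∧ (∀ u ∈ V, ∃ X ∈ L, u ∈ X) ∧
      ∀ u ∈ V, ∀ b, listCovTime L u ≤ D.cost (u, b) := by
  induction D generalizing V P with
  | leaf h => exact absurd hD (product_univ_bool_ne_singleton _ _)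
  | node t c ih =>
    obtain ⟨ht, hpred, hchild⟩ := hD
    obtain ⟨X, hXS, rfl⟩ := mem_image.1 ht
    rw [forall_liftLe_imp_mem_image_iff hXS] at hpred
    obtain ⟨L, hL, hcov, hcost⟩ : ∃ L, PrecSeqAfter S le (insert X P) L ∧
        (∀ u ∈ V \ X, ∃ Y ∈ L, u ∈ Y) ∧
        ∀ u ∈ V \ X, ∀ b, listCovTime L u ≤ (c ((U \ X) ×ˢ univ)).cost (u, b) := by
      rcases (V \ X).eq_empty_or_nonempty with hVX | ⟨u, hu⟩
      · exact ⟨[], trivial, by simp [hVX], by simp [hVX]⟩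
      have hrest := hchild _ (sdiff_product_mem_tX (hVU (mem_sdiff.1 hu).1) (mem_sdiff.1 hu).2)
      rw [sdiff_product_inter_product hVU, ← image_insert] at hrest
      refine ih _ (sdiff_subset.trans hVU) ⟨u, hu⟩ ?_ (hrest ⟨(u, true), by simp [hu]⟩)
      intro Y hY
      rcases mem_insert.1 hY with rfl | hY
      · exact disjoint_sdiff
      · exact (hPV Y hY).mono_right sdiff_subset
    by_cases hXP : X ∈ P
    · have hVX : ∀ u ∈ V, u ∉ X := fun u hu huX => disjoint_left.1 (hPV X hXP) huX hu
      refine ⟨L, insert_eq_of_mem hXP ▸ hL, fun u hu => hcov u (mem_sdiff.2 ⟨hu, hVX u hu⟩),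
        fun u hu b => ?_⟩
      rw [cost_node_tX_of_notMem b (hVU hu) (hVX u hu)]
      linarith [hcost u (mem_sdiff.2 ⟨hu, hVX u hu⟩) b]
    refine ⟨X :: L, ⟨hXS, hXP, hpred, hL⟩, fun u hu => ?_, fun u hu b => ?_⟩
    · by_cases huX : u ∈ X
      · exact ⟨X, List.mem_cons_self, huX⟩
      · exact (hcov u (mem_sdiff.2 ⟨hu, huX⟩)).imp fun Y ⟨hY, huY⟩ =>
          ⟨List.mem_cons_of_mem _ hY, huY⟩
    · rw [listCovTime_cons]
      by_cases huX : u ∈ X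
      · rw [if_pos huX, cost_node_tX_of_mem b huX]
        omega
      · rw [if_neg huX, cost_node_tX_of_notMem b (hVU hu) huX]
        linarith [hcost u (mem_sdiff.2 ⟨hu, huX⟩) b]

end Reduction

theorem stmt18_general {α : Type*} [DecidableEq α]
    (U : Finset α)
    (S : Finset (Finset α))
    (le : Finset α → Finset α → Prop) :
    sInf {c : ℕ | ∃ D : DTree (α × Bool),
        PrecValid (S.image (tX U)) (liftLe U S le) ∅
          (U ×ˢ (Finset.univ : Finset Bool)) D ∧
        costA (U ×ˢ (Finset.univ : Finset Bool)) D = c} =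
      2 * sInf {c : ℕ | ∃ L : List (Finset α),
        (∀ X ∈ L, X ∈ S) ∧ L.Nodup ∧ PrecSeq S le L ∧
        (∀ u ∈ U, ∃ X ∈ L, u ∈ X) ∧ (∑ u ∈ U, listCovTime L u) = c} := by
  rcases U.eq_empty_or_nonempty with rfl | ⟨u₀, hu₀⟩
  · simp only [costA, empty_product, sum_empty]
    rw [eq_comm, Nat.sInf_eq_zero.2 (.inl ?nil), mul_zero, eq_comm]
    · exact Nat.sInf_eq_zero.2 <|
        (Set.eq_empty_or_nonempty _).symm.imp (fun ⟨_, D, hD, _⟩ => ⟨D, hD, rfl⟩) id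
    · exact ⟨[], by simp [PrecSeq]⟩
  refine Nat.sInf_eq_mul_sInf_of_forall 2 ?_ ?_
  · rintro _ ⟨L, hLS, hnd, hprec, hcov, rfl⟩
    refine ⟨treeOfList U (u₀, true) L, ?_, costA_treeOfList _ L⟩
    simpa using precValid_treeOfList (u₀, true) Subset.rfl ⟨u₀, hu₀⟩
      (precSeqAfter_empty_iff.2 ⟨hLS, hnd, hprec⟩) hcov
  · rintro _ ⟨D, hD, rfl⟩
    obtain ⟨L, hL, hcov, hcost⟩ := exists_precSeqAfter_of_precValid (P := ∅) D Subset.rfl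
      ⟨u₀, hu₀⟩ (by simp) (by simpa using hD)
    obtain ⟨hLS, hnd, hprec⟩ := precSeqAfter_empty_iff.1 hL
    refine ⟨_, ⟨L, hLS, hnd, hprec, hcov, rfl⟩, ?_⟩
    rw [costA_product_univ_bool, mul_sum]
    exact sum_le_sum fun u hu =>
      two_mul (listCovTime L u) ▸ add_le_add (hcost u hu _) (hcost u hu _)

/-- the optimal average-case cost of a precedence-closed decision tree
for the constructed instance equals exactly twice the optimal value of Precedence
Constrained Min-Sum Set Cover (with f = 1). -/
theorem stmt18 {α : Type*} [DecidableEq α]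
    (U : Finset α) (hU : U.Nonempty)
    (S : Finset (Finset α)) (hsub : ∀ X ∈ S, X ⊆ U) (hcov : S.sup id = U)
    (le : Finset α → Finset α → Prop)
    (hrefl : ∀ X ∈ S, le X X)
    (htrans : ∀ X ∈ S, ∀ Y ∈ S, ∀ Z ∈ S, le X Y → le Y Z → le X Z)
    (hanti : ∀ X ∈ S, ∀ Y ∈ S, le X Y → le Y X → X = Y) :
    sInf {c : ℕ | ∃ D : DTree (α × Bool),
        PrecValid (S.image (tX U)) (liftLe U S le) ∅
          (U ×ˢ (Finset.univ : Finset Bool)) D ∧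
        costA (U ×ˢ (Finset.univ : Finset Bool)) D = c} =
      2 * sInf {c : ℕ | ∃ L : List (Finset α),
        (∀ X ∈ L, X ∈ S) ∧ L.Nodup ∧ PrecSeq S le L ∧
        (∀ u ∈ U, ∃ X ∈ L, u ∈ X) ∧ (∑ u ∈ U, listCovTime L u) = c} :=
  stmt18_general U S le
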